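/- Let ρ ∈ H¹(Ω) be a positive minimizer of E_ε(v) = (1/2)∫_Ω |∇v|² + (1/(2ε²))(a - |v|²)², and let A ∈ L²(Ω, ℝ³). Then for every u ∈ H¹(Ω, ℂ) with ρu ∈ H¹(Ω,ℂ), one has E_ε(ρu, A) = E_ε(ρ) + (1/2)∫_Ω ρ²|∇_A u|² + (ρ⁴/(2ε²))(1 - |u|²)², where E_ε(w, A) = (1/2)∫_Ω |∇_A w|² + (1/(2ε²))(a - |w|²)² and ∇_A = ∇ - iA. -/

import Mathlib

open MeasureTheory

noncomputable section

abbrev E3 : Type := EuclideanSpace ℝ (Fin 3)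

def pd (f : E3 → ℝ) (j : Fin 3) (x : E3) : ℝ := fderiv ℝ f x (EuclideanSpace.single j 1)

def gradSqR (f : E3 → ℝ) (x : E3) : ℝ := ∑ j : Fin 3, (pd f j x) ^ 2

/-- Squared norm of the covariant gradient `∇_A u = ∇u - iAu`. -/
def covSq (u : E3 → ℂ) (A : E3 → E3) (x : E3) : ℝ :=
  ∑ j : Fin 3, ‖fderiv ℝ u x (EuclideanSpace.single j 1) - Complex.I * (A x j : ℂ) * u x‖ ^ 2

def lap (f : E3 → ℝ) (x : E3) : ℝ :=
  ∑ j : Fin 3, fderiv ℝ (fun y => pd f j y) x (EuclideanSpace.single j 1)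

/-! With `φ = ρ (|u|² - 1)`, a pointwise computation gives
`e(ρu, A) = e(ρ) + ½ ρ² |∇_A u|² + ρ⁴/(2ε²) (1 - |u|²)² + ½ (∇ρ·∇φ - (2/ε²)(a - ρ²) ρ φ)`,
where `e` is the energy density: the potential `A` drops out of the cross term because
`Re(ū · i A u) = 0`. The last bracket is the first variation of `E_ε` at `ρ` in the direction `φ`.
Its integral vanishes since `t ↦ E_ε(ρ + t φ)` is a quartic polynomial with a minimum at `t = 0`. -/

lemma eq_zero_of_forall_le_quartic {c₀ c₁ c₂ c₃ c₄ : ℝ}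
    (h : ∀ t : ℝ, c₀ ≤ c₀ + t * c₁ + t ^ 2 * c₂ + t ^ 3 * c₃ + t ^ 4 * c₄) : c₁ = 0 := by
  have hmin : IsLocalMin (fun t : ℝ => c₀ + t * c₁ + t ^ 2 * c₂ + t ^ 3 * c₃ + t ^ 4 * c₄) 0 :=
    Filter.Eventually.of_forall fun t => by simpa using h t
  have hderiv : HasDerivAt (fun t : ℝ => c₀ + t * c₁ + t ^ 2 * c₂ + t ^ 3 * c₃ + t ^ 4 * c₄)
      c₁ 0 := by
    refine (((((hasDerivAt_id 0).mul_const c₁).const_add c₀).add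
      ((hasDerivAt_pow 2 0).mul_const c₂)).add ((hasDerivAt_pow 3 0).mul_const c₃)).add
      ((hasDerivAt_pow 4 0).mul_const c₄) |>.congr_deriv ?_
    simp
  exact hmin.hasDerivAt_eq_zero hderiv

lemma integral_quartic {α : Type*} [MeasurableSpace α] {μ : Measure α} {f₀ f₁ f₂ f₃ f₄ : α → ℝ}
    (h₀ : Integrable f₀ μ) (h₁ : Integrable f₁ μ) (h₂ : Integrable f₂ μ) (h₃ : Integrable f₃ μ)
    (h₄ : Integrable f₄ μ) (t : ℝ) :
    ∫ x, (f₀ x + t * f₁ x + t ^ 2 * f₂ x + t ^ 3 * f₃ x + t ^ 4 * f₄ x) ∂μ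
      = ∫ x, f₀ x ∂μ + t * ∫ x, f₁ x ∂μ + t ^ 2 * ∫ x, f₂ x ∂μ + t ^ 3 * ∫ x, f₃ x ∂μ
        + t ^ 4 * ∫ x, f₄ x ∂μ := by
  rw [integral_add (by fun_prop) (by fun_prop), integral_add (by fun_prop) (by fun_prop),
    integral_add (by fun_prop) (by fun_prop), integral_add h₀ (by fun_prop)]
  simp only [integral_const_mul]

lemma integrableOn_comp_of_continuous {X : Type*} [TopologicalSpace X] [MeasurableSpace X]
    [OpensMeasurableSpace X] [SecondCountableTopology X] {μ : Measure X}
    [IsFiniteMeasureOnCompacts μ]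
    {Ω : Set X} (hK : IsCompact (closure Ω)) (hΩ : MeasurableSet Ω)
    {a : X → ℝ} {lo hi : ℝ} (ha_meas : Measurable a) (ha : ∀ x ∈ Ω, a x ∈ Set.Icc lo hi)
    {F : X × ℝ → ℝ} (hF : Continuous F) :
    IntegrableOn (fun x => F (x, a x)) Ω μ := by
  obtain ⟨C, hC⟩ := (hK.prod isCompact_Icc).exists_bound_of_continuousOn hF.continuousOn
  refine Measure.integrableOn_of_bounded (M := C)
    ((measure_mono subset_closure).trans_lt hK.measure_lt_top).ne
    (hF.measurable.comp (measurable_id.prodMk ha_meas)).aestronglyMeasurable ?_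
  filter_upwards [ae_restrict_mem hΩ] with x hx
  exact hC _ ⟨subset_closure hx, ha x hx⟩

lemma fderiv_ofReal_mul_apply {E : Type*} [NormedAddCommGroup E] [NormedSpace ℝ E]
    {ρ : E → ℝ} {u : E → ℂ} {x : E}
    (hρ : DifferentiableAt ℝ ρ x) (hu : DifferentiableAt ℝ u x) (w : E) :
    fderiv ℝ (fun y => (ρ y : ℂ) * u y) x w = fderiv ℝ ρ x w * u x + ρ x * fderiv ℝ u x w := by
  simp_rw [← Complex.real_smul]
  rw [fderiv_fun_smul hρ hu]
  simp [Complex.real_smul]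
  ring

lemma fderiv_fun_norm_sq_apply {E F : Type*} [NormedAddCommGroup E] [NormedSpace ℝ E]
    [NormedAddCommGroup F] [InnerProductSpace ℝ F] {u : E → F} {x : E}
    (hu : DifferentiableAt ℝ u x) (w : E) :
    fderiv ℝ (fun y => ‖u y‖ ^ 2) x w = 2 * inner ℝ (u x) (fderiv ℝ u x w) := by
  simp [hu.hasFDerivAt.norm_sq.fderiv]

lemma norm_sub_I_mul_sq_le (d z : ℂ) (α : ℝ) :
    ‖d - Complex.I * α * z‖ ^ 2 ≤ 2 * ‖d‖ ^ 2 + 2 * (α ^ 2 * ‖z‖ ^ 2) := by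
  have h : ‖d - Complex.I * α * z‖ ≤ ‖d‖ + |α| * ‖z‖ := by
    simpa [norm_mul] using norm_sub_le d (Complex.I * α * z)
  nlinarith [norm_nonneg (d - Complex.I * α * z), sq_abs α, sq_nonneg (‖d‖ - |α| * ‖z‖)]

lemma norm_ofReal_mul_add_sq (r r' α : ℝ) (z d : ℂ) :
    ‖(r' : ℂ) * z + r * d - Complex.I * α * (r * z)‖ ^ 2
      = r' ^ 2 * ‖z‖ ^ 2 + r ^ 2 * ‖d - Complex.I * α * z‖ ^ 2 + r * r' * (2 * inner ℝ z d) := by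
  simp only [← Complex.normSq_eq_norm_sq, Complex.normSq_apply, Complex.inner, Complex.add_re,
    Complex.sub_re, Complex.mul_re, Complex.mul_im, Complex.add_im, Complex.sub_im, Complex.I_re,
    Complex.I_im, Complex.ofReal_re, Complex.ofReal_im, Complex.conj_re, Complex.conj_im]
  ring

lemma continuous_pd {f : E3 → ℝ} (hf : ContDiff ℝ 1 f) (j : Fin 3) : Continuous (pd f j) :=
  (hf.continuous_fderiv one_ne_zero).clm_apply continuous_const

lemma continuous_gradSqR {f : E3 → ℝ} (hf : ContDiff ℝ 1 f) : Continuous (gradSqR f) :=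
  continuous_finsetSum _ fun j _ => (continuous_pd hf j).pow 2

lemma covSq_nonneg (v : E3 → ℂ) (A : E3 → E3) (x : E3) : 0 ≤ covSq v A x :=
  Finset.sum_nonneg fun _ _ => sq_nonneg _

lemma covSq_le (v : E3 → ℂ) (A : E3 → E3) (x : E3) :
    covSq v A x ≤ 2 * (3 * ‖fderiv ℝ v x‖ ^ 2 + ‖v x‖ ^ 2 * ‖A x‖ ^ 2) := by
  have hpd : ∀ j : Fin 3, ‖fderiv ℝ v x (EuclideanSpace.single j 1)‖ ≤ ‖fderiv ℝ v x‖ := fun j =>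
    by simpa using (fderiv ℝ v x).le_opNorm (EuclideanSpace.single j 1)
  have hA : ‖A x‖ ^ 2 = ∑ j : Fin 3, A x j ^ 2 := by
    simp [EuclideanSpace.norm_sq_eq]
  calc covSq v A x ≤ ∑ j : Fin 3, (2 * ‖fderiv ℝ v x‖ ^ 2 + 2 * (A x j ^ 2 * ‖v x‖ ^ 2)) := by
        refine Finset.sum_le_sum fun j _ => (norm_sub_I_mul_sq_le _ _ _).trans ?_
        gcongr
        exact hpd j
    _ = _ := by simp [hA, Fin.sum_univ_three]; ring

lemma integrableOn_mul_covSq {Ω : Set E3} (hK : IsCompact (closure Ω)) (hΩ : MeasurableSet Ω)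
    {v : E3 → ℂ} (hv : ContDiff ℝ 1 v) {A : E3 → E3} (hA : MemLp A 2 (volume.restrict Ω))
    {w : E3 → ℝ} (hw : Continuous w) :
    IntegrableOn (fun x => w x * covSq v A x) Ω := by
  have := hv.continuous_fderiv one_ne_zero
  have := hv.continuous
  have := hA.aestronglyMeasurable
  have hbound : IntegrableOn
      (fun x => 2 * (3 * ‖fderiv ℝ v x‖ ^ 2 + ‖v x‖ ^ 2 * ‖A x‖ ^ 2)) Ω :=
    ((((by fun_prop : Continuous fun x => 3 * ‖fderiv ℝ v x‖ ^ 2).continuousOn.integrableOn_compact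
      hK).mono_set subset_closure).add
      (IntegrableOn.continuousOn_mul_of_subset
        (by fun_prop : Continuous fun x => ‖v x‖ ^ 2).continuousOn
        (hA.integrable_norm_pow two_ne_zero) hK hΩ subset_closure)).const_mul 2
  have hcov : IntegrableOn (covSq v A) Ω := by
    refine hbound.mono' (by unfold covSq; fun_prop) (ae_of_all _ fun x => ?_)
    rw [Real.norm_of_nonneg (covSq_nonneg v A x)]
    exact covSq_le v A x
  exact hcov.continuousOn_mul_of_subset hw.continuousOn hK hΩ subset_closure

lemma covSq_ofReal_mul {ρ : E3 → ℝ} {u : E3 → ℂ} {x : E3} (hρ : DifferentiableAt ℝ ρ x)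
    (hu : DifferentiableAt ℝ u x) (A : E3 → E3) :
    covSq (fun y => (ρ y : ℂ) * u y) A x
      = ‖u x‖ ^ 2 * gradSqR ρ x + ρ x ^ 2 * covSq u A x
        + ρ x * ∑ j : Fin 3, pd ρ j x * pd (fun y => ‖u y‖ ^ 2) j x := by
  simp only [covSq, gradSqR, pd, fderiv_ofReal_mul_apply hρ hu, fderiv_fun_norm_sq_apply hu,
    norm_ofReal_mul_add_sq, Fin.sum_univ_three]
  ring

def glDensity (ε : ℝ) (a v : E3 → ℝ) (x : E3) : ℝ :=
  1 / 2 * gradSqR v x + 1 / (2 * ε ^ 2) * (a x - v x ^ 2) ^ 2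

def firstVariationDensity (ε : ℝ) (a ρ φ : E3 → ℝ) (x : E3) : ℝ :=
  ∑ j : Fin 3, pd ρ j x * pd φ j x - 2 / ε ^ 2 * (a x - ρ x ^ 2) * ρ x * φ x

lemma integrableOn_glDensity {Ω : Set E3} (hK : IsCompact (closure Ω)) (hΩ : MeasurableSet Ω)
    {a : E3 → ℝ} {lo hi : ℝ} (ha_meas : Measurable a) (ha : ∀ x ∈ Ω, a x ∈ Set.Icc lo hi)
    (ε : ℝ) {v : E3 → ℝ} (hv : ContDiff ℝ 1 v) :
    IntegrableOn (glDensity ε a v) Ω := by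
  have := hv.continuous
  have := continuous_gradSqR hv
  exact integrableOn_comp_of_continuous hK hΩ ha_meas ha
    (F := fun p => 1 / 2 * gradSqR v p.1 + 1 / (2 * ε ^ 2) * (p.2 - v p.1 ^ 2) ^ 2) (by fun_prop)

lemma integrableOn_firstVariationDensity {Ω : Set E3} (hK : IsCompact (closure Ω))
    (hΩ : MeasurableSet Ω) {a : E3 → ℝ} {lo hi : ℝ} (ha_meas : Measurable a)
    (ha : ∀ x ∈ Ω, a x ∈ Set.Icc lo hi) (ε : ℝ) {ρ φ : E3 → ℝ} (hρ : ContDiff ℝ 1 ρ)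
    (hφ : ContDiff ℝ 1 φ) :
    IntegrableOn (firstVariationDensity ε a ρ φ) Ω := by
  have := hρ.continuous
  have := hφ.continuous
  have := continuous_pd hρ
  have := continuous_pd hφ
  exact integrableOn_comp_of_continuous hK hΩ ha_meas ha
    (F := fun p => ∑ j : Fin 3, pd ρ j p.1 * pd φ j p.1
      - 2 / ε ^ 2 * (p.2 - ρ p.1 ^ 2) * ρ p.1 * φ p.1) (by fun_prop)

lemma glDensity_add_mul {ρ φ : E3 → ℝ} {x : E3} (hρ : DifferentiableAt ℝ ρ x)
    (hφ : DifferentiableAt ℝ φ x) (ε : ℝ) (a : E3 → ℝ) (t : ℝ) :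
    glDensity ε a (fun y => ρ y + t * φ y) x
      = glDensity ε a ρ x + t * firstVariationDensity ε a ρ φ x
        + t ^ 2 * (1 / 2 * gradSqR φ x + (3 * ρ x ^ 2 - a x) * φ x ^ 2 / ε ^ 2)
        + t ^ 3 * (2 * ρ x * φ x ^ 3 / ε ^ 2) + t ^ 4 * (φ x ^ 4 / (2 * ε ^ 2)) := by
  simp only [glDensity, firstVariationDensity, gradSqR, pd, fderiv_fun_add hρ (hφ.const_mul t),
    fderiv_const_mul hφ t, add_apply, smul_apply, smul_eq_mul, Fin.sum_univ_three]
  field_simp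
  ring

lemma magneticDensity_ofReal_mul {ρ : E3 → ℝ} {u : E3 → ℂ} {x : E3} (hρ : DifferentiableAt ℝ ρ x)
    (hu : DifferentiableAt ℝ u x) (ε : ℝ) (a : E3 → ℝ) (A : E3 → E3) :
    1 / 2 * covSq (fun y => (ρ y : ℂ) * u y) A x
        + 1 / (2 * ε ^ 2) * (a x - ‖(ρ x : ℂ) * u x‖ ^ 2) ^ 2
      = glDensity ε a ρ x
        + (1 / 2 * ρ x ^ 2 * covSq u A x + ρ x ^ 4 / (2 * ε ^ 2) * (1 - ‖u x‖ ^ 2) ^ 2)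
        + 1 / 2 * firstVariationDensity ε a ρ (fun y => ρ y * (‖u y‖ ^ 2 - 1)) x := by
  rw [covSq_ofReal_mul hρ hu]
  simp only [glDensity, firstVariationDensity, gradSqR, pd,
    fderiv_fun_mul hρ ((hu.norm_sq ℝ).sub_const 1), fderiv_sub_const, add_apply,
    smul_apply, smul_eq_mul, norm_mul, Complex.norm_real, Real.norm_eq_abs,
    mul_pow, sq_abs, Fin.sum_univ_three]
  field_simp
  ring

theorem integral_firstVariationDensity_eq_zero {Ω : Set E3} (hK : IsCompact (closure Ω))
    (hΩ : MeasurableSet Ω) {ε lo hi : ℝ} {a : E3 → ℝ} (ha_meas : Measurable a)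
    (ha : ∀ x ∈ Ω, a x ∈ Set.Icc lo hi) {ρ : E3 → ℝ} (hρ : ContDiff ℝ 1 ρ)
    (hmin : ∀ v : E3 → ℝ, ContDiff ℝ 1 v →
      ∫ x in Ω, glDensity ε a ρ x ≤ ∫ x in Ω, glDensity ε a v x)
    {φ : E3 → ℝ} (hφ : ContDiff ℝ 1 φ) :
    ∫ x in Ω, firstVariationDensity ε a ρ φ x = 0 := by
  have hint : ∀ F : E3 × ℝ → ℝ, Continuous F → IntegrableOn (fun x => F (x, a x)) Ω :=
    fun F hF => integrableOn_comp_of_continuous hK hΩ ha_meas ha hF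
  have := hρ.continuous
  have := hφ.continuous
  have := continuous_gradSqR hφ
  apply eq_zero_of_forall_le_quartic (c₀ := ∫ x in Ω, glDensity ε a ρ x)
  intro t
  have h := hmin (fun y => ρ y + t * φ y) (hρ.add (contDiff_const.mul hφ))
  rwa [integral_congr_ae (ae_of_all _ fun x => glDensity_add_mul (hρ.differentiable one_ne_zero x)
      (hφ.differentiable one_ne_zero x) ε a t),
    integral_quartic (integrableOn_glDensity hK hΩ ha_meas ha ε hρ)
      (integrableOn_firstVariationDensity hK hΩ ha_meas ha ε hρ hφ) ?_ ?_ ?_] at h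
  · exact hint (fun p => 1 / 2 * gradSqR φ p.1 + (3 * ρ p.1 ^ 2 - p.2) * φ p.1 ^ 2 / ε ^ 2)
      (by fun_prop)
  · exact hint (fun p => 2 * ρ p.1 * φ p.1 ^ 3 / ε ^ 2) (by fun_prop)
  · exact hint (fun p => φ p.1 ^ 4 / (2 * ε ^ 2)) (by fun_prop)

theorem stmt_2_general
    (Ω : Set E3) (hΩbdd : Bornology.IsBounded Ω) (hΩmeas : MeasurableSet Ω)
    (b ε : ℝ)
    (a : E3 → ℝ) (ha_meas : Measurable a) (ha : ∀ x ∈ Ω, b ≤ a x ∧ a x ≤ 1)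
    (ρ : E3 → ℝ) (hρreg : ContDiff ℝ 2 ρ)
    -- ρ is a minimizer of E_ε :
    (hmin : ∀ v : E3 → ℝ, ContDiff ℝ 1 v →
      (∫ x in Ω, (((1:ℝ)/2) * gradSqR ρ x + (1/(2*ε^2)) * (a x - ρ x ^ 2) ^ 2)) ≤
      ∫ x in Ω, (((1:ℝ)/2) * gradSqR v x + (1/(2*ε^2)) * (a x - v x ^ 2) ^ 2))
    (A : E3 → E3) (hA : MemLp A 2 (volume.restrict Ω))
    (u : E3 → ℂ) (hu : ContDiff ℝ 1 u) :
    (∫ x in Ω, (((1:ℝ)/2) * covSq (fun y => (ρ y : ℂ) * u y) A x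
        + (1/(2*ε^2)) * (a x - ‖(ρ x : ℂ) * u x‖ ^ 2) ^ 2))
      = (∫ x in Ω, (((1:ℝ)/2) * gradSqR ρ x + (1/(2*ε^2)) * (a x - ρ x ^ 2) ^ 2))
        + ∫ x in Ω, (((1:ℝ)/2) * ρ x ^ 2 * covSq u A x
            + (ρ x ^ 4 / (2*ε^2)) * (1 - ‖u x‖ ^ 2) ^ 2) := by
  have hK := hΩbdd.isCompact_closure
  have hρ : ContDiff ℝ 1 ρ := hρreg.of_le (by norm_num)
  have hφ : ContDiff ℝ 1 fun y => ρ y * (‖u y‖ ^ 2 - 1) :=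
    hρ.mul ((hu.norm_sq ℝ).sub contDiff_const)
  have hEL := integral_firstVariationDensity_eq_zero hK hΩmeas ha_meas ha hρ hmin hφ
  have := hρ.continuous
  have hpotential : Continuous fun x => ρ x ^ 4 / (2 * ε ^ 2) * (1 - ‖u x‖ ^ 2) ^ 2 := by
    have := hu.continuous
    fun_prop
  have hdecoupled : IntegrableOn (fun x => 1 / 2 * ρ x ^ 2 * covSq u A x
      + ρ x ^ 4 / (2 * ε ^ 2) * (1 - ‖u x‖ ^ 2) ^ 2) Ω :=
    (integrableOn_mul_covSq hK hΩmeas hu hA (by fun_prop)).add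
      ((hpotential.continuousOn.integrableOn_compact hK).mono_set subset_closure)
  have hglρ := integrableOn_glDensity hK hΩmeas ha_meas ha ε hρ
  rw [integral_congr_ae (ae_of_all _ fun x => magneticDensity_ofReal_mul
      (hρ.differentiable one_ne_zero x) (hu.differentiable one_ne_zero x) ε a A),
    integral_add ?_
      ((integrableOn_firstVariationDensity hK hΩmeas ha_meas ha ε hρ hφ).const_mul _),
    integral_add hglρ hdecoupled, integral_const_mul, hEL, mul_zero, add_zero]
  · rfl
  · exact hglρ.add hdecoupled

/-- the magnetic Lassoued–Mironescu decoupling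
`E_ε(ρu, A) = E_ε(ρ) + (1/2)∫_Ω ρ²|∇_A u|² + (ρ⁴/(2ε²))(1 - |u|²)²`. -/
theorem stmt_2
    (Ω : Set E3) (hΩopen : IsOpen Ω) (hΩbdd : Bornology.IsBounded Ω) (hΩmeas : MeasurableSet Ω)
    (b ε : ℝ) (hb0 : 0 < b) (hb1 : b < 1) (hε : 0 < ε)
    (a : E3 → ℝ) (ha_meas : Measurable a) (ha : ∀ x ∈ Ω, b ≤ a x ∧ a x ≤ 1)
    (ρ : E3 → ℝ) (hρreg : ContDiff ℝ 2 ρ) (hρpos : ∀ x ∈ closure Ω, 0 < ρ x)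
    -- ρ is a minimizer of E_ε :
    (hmin : ∀ v : E3 → ℝ, ContDiff ℝ 1 v →
      (∫ x in Ω, (((1:ℝ)/2) * gradSqR ρ x + (1/(2*ε^2)) * (a x - ρ x ^ 2) ^ 2)) ≤
      ∫ x in Ω, (((1:ℝ)/2) * gradSqR v x + (1/(2*ε^2)) * (a x - v x ^ 2) ^ 2))
    -- and hence solves the Euler–Lagrange equation with Neumann boundary condition :
    (hPDE : ∀ x ∈ Ω, -lap ρ x = ρ x * (a x - ρ x ^ 2) / ε ^ 2)
    (ν : E3 → E3) (hNeu : ∀ x ∈ frontier Ω, fderiv ℝ ρ x (ν x) = 0)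
    (A : E3 → E3) (hA : MemLp A 2 (volume.restrict Ω))
    (u : E3 → ℂ) (hu : ContDiff ℝ 1 u) :
    (∫ x in Ω, (((1:ℝ)/2) * covSq (fun y => (ρ y : ℂ) * u y) A x
        + (1/(2*ε^2)) * (a x - ‖(ρ x : ℂ) * u x‖ ^ 2) ^ 2))
      = (∫ x in Ω, (((1:ℝ)/2) * gradSqR ρ x + (1/(2*ε^2)) * (a x - ρ x ^ 2) ^ 2))
        + ∫ x in Ω, (((1:ℝ)/2) * ρ x ^ 2 * covSq u A x
            + (ρ x ^ 4 / (2*ε^2)) * (1 - ‖u x‖ ^ 2) ^ 2) :=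
  stmt_2_general Ω hΩbdd hΩmeas b ε a ha_meas ha ρ hρreg hmin A hA u hu
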